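/- arXiv:2103.12776 — 2 statements merged into one kernel-verified Lean document; each statement's English description precedes it below -/
import Mathlib

section
/- For positive reals u and v, u log(u/v) − (u − v) ≥ (√u − √v)². -/
/-- Pointwise entropy inequality: `u log(u/v) − (u − v) ≥ (√u − √v)²` for `u, v > 0`. -/
theorem entropy_ge_sq_sqrt_sub (u v : ℝ) (hu : 0 < u) (hv : 0 < v) :
    (Real.sqrt u - Real.sqrt v) ^ 2 ≤ u * Real.log (u / v) - (u - v) := by
  set a := Real.sqrt u with hadef
  set b := Real.sqrt v with hbdef
  have ha : 0 < a := Real.sqrt_pos.2 hu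
  have hb : 0 < b := Real.sqrt_pos.2 hv
  have hua : a ^ 2 = u := Real.sq_sqrt hu.le
  have hvb : b ^ 2 = v := Real.sq_sqrt hv.le
  have hlog : Real.log (u / v) = 2 * Real.log (a / b) := by
    rw [Real.log_div hu.ne' hv.ne', Real.log_div ha.ne' hb.ne', ← hua, ← hvb,
      Real.log_pow, Real.log_pow]
    push_cast; ring
  have key : 1 - b / a ≤ Real.log (a / b) := by
    have h := Real.log_le_sub_one_of_pos (show 0 < b / a by positivity)
    rw [Real.log_div hb.ne' ha.ne'] at h
    rw [Real.log_div ha.ne' hb.ne']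
    linarith
  have key2 : 2 * a ^ 2 * (1 - b / a) ≤ 2 * a ^ 2 * Real.log (a / b) :=
    mul_le_mul_of_nonneg_left key (by positivity)
  have hcancel : a * (b / a) = b := mul_div_cancel₀ b ha.ne'
  rw [hlog, ← hua, ← hvb]
  nlinarith [key2, hcancel]
end

section
/- Let r : ℝ_{≥0}^k → ℝ^k be continuously differentiable and suppose there exist π_i > 0 and λ_i ∈ ℝ such that Σ_i π_i r_i(n)(log(n_i/c_i) + λ_i) ≥ 0 for all n ∈ (0,∞)^k, where c ∈ (0,∞)^k. Then r is quasi-negative: for each i and each n ∈ ℝ_{≥0}^k with n_i = 0, r_i(n) ≤ 0. -/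
open Filter Topology

/-- The entropy inequality `Σ_i π_i r_i(n)(log(n_i/c_i) + λ_i) ≥ 0` for a `C¹`
recombination term implies quasi-negativity: `r_i(n) ≤ 0` whenever `n ≥ 0` and `n_i = 0`. -/
theorem entropy_inequality_implies_quasi_negative (k : ℕ)
    (c : Fin k → ℝ) (hc : ∀ i, 0 < c i)
    (π : Fin k → ℝ) (hπ : ∀ i, 0 < π i) (lam : Fin k → ℝ)
    (r : (Fin k → ℝ) → (Fin k → ℝ))
    (hreg : ContDiffOn ℝ 1 r {n : Fin k → ℝ | ∀ i, 0 ≤ n i})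
    (hent : ∀ n : Fin k → ℝ, (∀ i, 0 < n i) →
      0 ≤ ∑ i, π i * r n i * (Real.log (n i / c i) + lam i)) :
    ∀ n : Fin k → ℝ, (∀ i, 0 ≤ n i) → ∀ i, n i = 0 → r n i ≤ 0 := by
  have hr : ContinuousOn r {n : Fin k → ℝ | ∀ i, 0 ≤ n i} := hreg.continuousOn
  set S : Set (Fin k → ℝ) := {n : Fin k → ℝ | ∀ i, 0 ≤ n i} with hSdef
  intro n hn i hni
  -- approximating family: coordinate i is 0, others are n j + δ
  set m : ℝ → (Fin k → ℝ) := fun δ j => if j = i then 0 else n j + δ with hm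
  have hmS : ∀ δ : ℝ, 0 ≤ δ → m δ ∈ S := by
    intro δ hδ j
    by_cases h : j = i
    · simp [hm, h]
    · simp only [hm, if_neg h]
      have := hn j; linarith
  have hmi : ∀ δ : ℝ, m δ i = 0 := by intro δ; simp [hm]
  -- Key step: r (m δ) i ≤ 0 for δ > 0
  have key : ∀ δ : ℝ, 0 < δ → r (m δ) i ≤ 0 := by
    intro δ hδ
    by_contra hpos
    push_neg at hpos
    set p : ℝ → (Fin k → ℝ) := fun ε => Function.update (m δ) i ε with hp
    have hp0 : p 0 = m δ := by
      rw [hp]; simpa [hmi δ] using Function.update_eq_self i (m δ)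
    have hpj : ∀ ε : ℝ, ∀ j, j ≠ i → p ε j = m δ j := by
      intro ε j hj; simp [hp, Function.update_of_ne hj]
    have hpi : ∀ ε : ℝ, p ε i = ε := by intro ε; simp [hp]
    have hppos : ∀ ε : ℝ, 0 < ε → ∀ j, 0 < p ε j := by
      intro ε hε j
      by_cases h : j = i
      · rw [h, hpi]; exact hε
      · rw [hpj ε j h, hm]; simp only [if_neg h]
        have := hn j; linarith
    -- p ε tends to m δ within S as ε → 0⁺
    have htp : Tendsto p (𝓝[>] (0:ℝ)) (𝓝[S] (m δ)) := by
      apply tendsto_nhdsWithin_of_tendsto_nhds_of_eventually_within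
      · have hcont : Continuous p := by
          apply continuous_pi
          intro j
          by_cases h : j = i
          · subst h; simpa using (continuous_id.congr fun ε => (hpi ε).symm)
          · exact (continuous_const.congr fun ε => (hpj ε j h).symm)
        have := hcont.tendsto 0
        rw [hp0] at this
        exact this.mono_left nhdsWithin_le_nhds
      · filter_upwards [self_mem_nhdsWithin] with ε hε
        exact fun j => (hppos ε hε j).le
    have htr : Tendsto (fun ε => r (p ε)) (𝓝[>] (0:ℝ)) (𝓝 (r (m δ))) :=
      (hr (m δ) (hmS δ hδ.le)).tendsto.comp htp
    have htrj : ∀ j, Tendsto (fun ε => r (p ε) j) (𝓝[>] (0:ℝ)) (𝓝 (r (m δ) j)) :=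
      fun j => ((continuous_apply j).tendsto _).comp htr
    -- the constant part of the sum
    set C : ℝ := ∑ j ∈ {i}ᶜ, π j * r (m δ) j * (Real.log (m δ j / c j) + lam j) with hC
    have hrest : Tendsto
        (fun ε => ∑ j ∈ {i}ᶜ, π j * r (p ε) j * (Real.log (m δ j / c j) + lam j))
        (𝓝[>] (0:ℝ)) (𝓝 C) := by
      rw [hC]
      exact tendsto_finset_sum _ fun j _ =>
        (((htrj j).const_mul (π j)).mul_const _)
    -- r (p ε) i eventually ≥ L/2 where L = r (m δ) i > 0
    set L : ℝ := r (m δ) i with hL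
    have hev1 : ∀ᶠ ε in 𝓝[>] (0:ℝ), L / 2 ≤ r (p ε) i :=
      (htrj i).eventually (eventually_ge_nhds (by linarith))
    have hev2 : ∀ᶠ ε in 𝓝[>] (0:ℝ),
        ∑ j ∈ {i}ᶜ, π j * r (p ε) j * (Real.log (m δ j / c j) + lam j) ≤ C + 1 :=
      hrest.eventually (eventually_le_nhds (by linarith))
    -- log term tends to -∞
    have hlog : Tendsto (fun ε : ℝ => Real.log (ε / c i) + lam i) (𝓝[>] (0:ℝ)) atBot := by
      have h1 : Tendsto (fun ε : ℝ => Real.log ε - Real.log (c i) + lam i)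
          (𝓝[>] (0:ℝ)) atBot := by
        apply tendsto_atBot_add_const_right
        apply tendsto_atBot_add_const_right
        exact Real.tendsto_log_nhdsGT_zero
      apply h1.congr'
      filter_upwards [self_mem_nhdsWithin] with ε hε
      rw [Real.log_div (ne_of_gt hε) (hc i).ne']
    have hbig : Tendsto (fun ε : ℝ => π i * (L / 2) * (Real.log (ε / c i) + lam i))
        (𝓝[>] (0:ℝ)) atBot := by
      apply Filter.Tendsto.const_mul_atBot _ hlog
      have := hπ i; positivity
    have hev3 : ∀ᶠ ε in 𝓝[>] (0:ℝ),
        π i * (L / 2) * (Real.log (ε / c i) + lam i) < -(C + 1) :=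
      hbig.eventually (eventually_lt_atBot _)
    have hev4 : ∀ᶠ ε in 𝓝[>] (0:ℝ), Real.log (ε / c i) + lam i ≤ 0 :=
      hlog.eventually (eventually_le_atBot 0)
    obtain ⟨ε, hε1, hε2, hε3, hε4, hε5⟩ :=
      (hev1.and (hev2.and (hev3.and (hev4.and self_mem_nhdsWithin)))).exists
    -- now derive a contradiction with the entropy inequality at p ε
    have hεpos : (0:ℝ) < ε := hε5
    have hsum := hent (p ε) (hppos ε hεpos)
    rw [Fintype.sum_eq_add_sum_compl i] at hsum
    have hterms : ∀ j ∈ ({i}ᶜ : Finset (Fin k)),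
        π j * r (p ε) j * (Real.log (p ε j / c j) + lam j)
          = π j * r (p ε) j * (Real.log (m δ j / c j) + lam j) := by
      intro j hj
      rw [hpj ε j (by simpa using hj)]
    rw [Finset.sum_congr rfl hterms] at hsum
    have hibound : π i * r (p ε) i * (Real.log (p ε i / c i) + lam i)
        ≤ π i * (L / 2) * (Real.log (ε / c i) + lam i) := by
      rw [hpi ε]
      apply mul_le_mul_of_nonpos_right _ hε4
      have hπi := (hπ i).le
      nlinarith [hπ i, hε1, hpos]
    linarith
  -- pass to the limit δ → 0⁺
  have hm0 : m 0 = n := by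
    funext j
    by_cases h : j = i
    · rw [hm]; simp [h, hni.symm]
    · simp [hm, h]
  have htm : Tendsto m (𝓝[>] (0:ℝ)) (𝓝[S] n) := by
    apply tendsto_nhdsWithin_of_tendsto_nhds_of_eventually_within
    · have hcont : Continuous m := by
        apply continuous_pi
        intro j
        by_cases h : j = i
        · simpa [hm, h] using continuous_const
        · simp only [hm, if_neg h]
          exact continuous_const.add continuous_id
      have := hcont.tendsto 0
      rw [hm0] at this
      exact this.mono_left nhdsWithin_le_nhds
    · filter_upwards [self_mem_nhdsWithin] with δ hδ
      exact hmS δ (le_of_lt hδ)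
  have htrn : Tendsto (fun δ => r (m δ) i) (𝓝[>] (0:ℝ)) (𝓝 (r n i)) :=
    ((continuous_apply i).tendsto _).comp ((hr n hn).tendsto.comp htm)
  exact le_of_tendsto htrn (by
    filter_upwards [self_mem_nhdsWithin] with δ hδ
    exact key δ hδ)
end
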